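/- Let R be a right-flat right-linear TRS and define, for each term t, ‖t‖ as the number of positions p of t such that t|_p is not reachable from a constant. If s →_R t then ‖s‖ ≥ ‖t‖. -/

import Mathlib

/-- First-order terms over function symbols `F` and variables `V`. -/
inductive Tm (F V : Type) : Type
  | var : V → Tm F V
  | app : F → List (Tm F V) → Tm F V

namespace Tm

variable {F V : Type}

/-- Height of a term: 0 for variables and constants. -/
def height : Tm F V → ℕ
  | var _ => 0
  | app _ ts => ts.attach.foldr (fun t m => max (height t.1 + 1) m) 0
decreasing_by all_goals (simp_wf; have := List.sizeOf_lt_of_mem t.2; omega)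

/-- Size (number of positions) of a term. -/
def size : Tm F V → ℕ
  | var _ => 1
  | app _ ts => 1 + (ts.attach.map (fun t => size t.1)).sum
decreasing_by all_goals (simp_wf; have := List.sizeOf_lt_of_mem t.2; omega)

/-- Apply a substitution. -/
def subst (σ : V → Tm F V) : Tm F V → Tm F V
  | var x => σ x
  | app f ts => app f (ts.attach.map (fun t => subst σ t.1))
decreasing_by all_goals (simp_wf; have := List.sizeOf_lt_of_mem t.2; omega)

/-- List of variable occurrences. -/
def varList : Tm F V → List V
  | var x => [x]
  | app _ ts => (ts.attach.map (fun t => varList t.1)).flatten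
decreasing_by all_goals (simp_wf; have := List.sizeOf_lt_of_mem t.2; omega)

/-- List of function-symbol occurrences. -/
def symList : Tm F V → List F
  | var _ => []
  | app f ts => f :: (ts.attach.map (fun t => symList t.1)).flatten
decreasing_by all_goals (simp_wf; have := List.sizeOf_lt_of_mem t.2; omega)

/-- The subterm at a position (positions are lists of argument indices). -/
def subAt : Tm F V → List ℕ → Option (Tm F V)
  | t, [] => some t
  | var _, _ :: _ => none
  | app _ ts, i :: p => match ts[i]? with
      | some u => subAt u p
      | none => none

/-- Replace the subterm at a position. -/
def replAt : Tm F V → List ℕ → Tm F V → Option (Tm F V)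
  | _, [], s => some s
  | var _, _ :: _, _ => none
  | app f ts, i :: p, s => match ts[i]? with
      | some u => (replAt u p s).map (fun u' => app f (ts.set i u'))
      | none => none

/-- `p` is a position of `t`. -/
def IsPos (t : Tm F V) (p : List ℕ) : Prop := (t.subAt p).isSome

/-- A term is a constant if it is a nullary function application. -/
def IsConst (t : Tm F V) : Prop := ∃ f : F, t = app f []

def Ground (t : Tm F V) : Prop := t.varList = []

/-- A term is linear if each variable occurs at most once. -/
def Linear (t : Tm F V) : Prop := t.varList.Nodup

/-- A term is flat if its height is at most 1. -/
def Flat (t : Tm F V) : Prop := t.height ≤ 1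

/-- A term is shallow if all variables occur at depth at most 1. -/
def Shallow (t : Tm F V) : Prop :=
  ∀ (p : List ℕ) (x : V), t.subAt p = some (var x) → p.length ≤ 1

end Tm

/-- A rewrite rule. -/
structure Rule (F V : Type) where
  lhs : Tm F V
  rhs : Tm F V

namespace Rule

variable {F V : Type}

/-- Standard well-formedness: the lhs is not a variable and variables of the
rhs occur in the lhs. -/
def WF (r : Rule F V) : Prop :=
  (∀ x : V, r.lhs ≠ Tm.var x) ∧ ∀ x ∈ r.rhs.varList, x ∈ r.lhs.varList

def RightFlat (r : Rule F V) : Prop := r.rhs.Flat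
def RightLinear (r : Rule F V) : Prop := r.rhs.Linear
def RightShallow (r : Rule F V) : Prop := r.rhs.Shallow
def FlatRule (r : Rule F V) : Prop := r.lhs.Flat ∧ r.rhs.Flat
def ShallowRule (r : Rule F V) : Prop := r.lhs.Shallow ∧ r.rhs.Shallow
def Collapsing (r : Rule F V) : Prop := ∃ x : V, r.rhs = Tm.var x

/-- A permutative rule: linear, flat, height-preserving and variable-preserving. -/
def Permutative (r : Rule F V) : Prop :=
  r.WF ∧ r.lhs.Linear ∧ r.rhs.Linear ∧ r.lhs.Flat ∧ r.rhs.Flat ∧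
    r.lhs.height = r.rhs.height ∧ ∀ x : V, x ∈ r.lhs.varList ↔ x ∈ r.rhs.varList

end Rule

/-- A permutative theory: a symmetric set of permutative rules. -/
def PermutativeTheory {F V : Type} (E : Set (Rule F V)) : Prop :=
  (∀ r ∈ E, r.Permutative) ∧ ∀ r ∈ E, (⟨r.rhs, r.lhs⟩ : Rule F V) ∈ E

section Rewriting

variable {F V : Type}

/-- One rewrite step with rule `l → r` at position `p` using substitution `σ`. -/
def RewWith (l r : Tm F V) (p : List ℕ) (σ : V → Tm F V) (s t : Tm F V) : Prop :=
  s.subAt p = some (l.subst σ) ∧ s.replAt p (r.subst σ) = some t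

/-- One rewrite step with TRS `R` at position `p`. -/
def RewAt (R : Set (Rule F V)) (p : List ℕ) (s t : Tm F V) : Prop :=
  ∃ r ∈ R, ∃ σ : V → Tm F V, RewWith r.lhs r.rhs p σ s t

/-- One rewrite step with TRS `R`. -/
def Rew (R : Set (Rule F V)) (s t : Tm F V) : Prop := ∃ p, RewAt R p s t

/-- Reachability: reflexive-transitive closure of one-step rewriting. -/
def Reach (R : Set (Rule F V)) : Tm F V → Tm F V → Prop :=
  Relation.ReflTransGen (Rew R)

/-- One rewrite step with `R` modulo `E` : `s →E* · →R · →E* t`. -/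
def RewMod (R E : Set (Rule F V)) (s t : Tm F V) : Prop :=
  ∃ u v, Reach E s u ∧ Rew R u v ∧ Reach E v t

/-- `R/E` is terminating from `s`. -/
def TerminatingFrom (R E : Set (Rule F V)) (s : Tm F V) : Prop :=
  ¬ ∃ f : ℕ → Tm F V, f 0 = s ∧ ∀ n, RewMod R E (f n) (f (n + 1))

/-- `R/E` is terminating. -/
def Terminating (R E : Set (Rule F V)) : Prop :=
  ¬ ∃ f : ℕ → Tm F V, ∀ n, RewMod R E (f n) (f (n + 1))

/-- `t` is reachable from some constant. -/
def FromConst (R : Set (Rule F V)) (t : Tm F V) : Prop :=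
  ∃ f : F, Reach R (Tm.app f []) t

/-- The measure `‖t‖`: number of positions of `t` whose subterm is not reachable
from a constant. -/
noncomputable def meas (R : Set (Rule F V)) (t : Tm F V) : ℕ :=
  Nat.card {p : List ℕ // ∃ u, t.subAt p = some u ∧ ¬ FromConst R u}

/-- `t` is a normal form w.r.t. `R/E`. -/
def NFMod (R E : Set (Rule F V)) (t : Tm F V) : Prop := ¬ ∃ t', RewMod R E t t'

/-- `t` is `R`-irreducible. -/
def NF (R : Set (Rule F V)) (t : Tm F V) : Prop := ¬ ∃ t', Rew R t t'

/-- Innermost rewrite step with `R` (plain rewriting): all proper subterms of the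
redex are irreducible. -/
def IRew (R : Set (Rule F V)) (s t : Tm F V) : Prop :=
  ∃ p, RewAt R p s t ∧
    ∀ (q : List ℕ) (w : Tm F V), q ≠ [] → s.subAt (p ++ q) = some w → NF R w

/-- Innermost rewrite step with `R` modulo `E`. -/
def IRewMod (R E : Set (Rule F V)) (s t : Tm F V) : Prop :=
  ∃ u v, ∃ p : List ℕ, Reach E s u ∧ RewAt R p u v ∧ Reach E v t ∧
    ∀ (q : List ℕ) (w : Tm F V), q ≠ [] → u.subAt (p ++ q) = some w → NFMod R E w

/-- Innermost termination of `R/E`. -/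
def ITerminating (R E : Set (Rule F V)) : Prop :=
  ¬ ∃ f : ℕ → Tm F V, ∀ n, IRewMod R E (f n) (f (n + 1))

end Rewriting

section Marking

variable {F V : Type}

/-- A derivation of length `n` with explicit rules, positions and substitutions. -/
def IsDeriv (R : Set (Rule F V)) (n : ℕ) (s : ℕ → Tm F V) (rl : ℕ → Rule F V)
    (pp : ℕ → List ℕ) (sb : ℕ → V → Tm F V) : Prop :=
  ∀ i < n, rl i ∈ R ∧ RewWith (rl i).lhs (rl i).rhs (pp i) (sb i) (s i) (s (i + 1))

/-- `p'` is strictly below `p̄` : `p̄` is a proper prefix of `p'`. -/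
def StrictBelow (pbar p : List ℕ) : Prop := ∃ q, q ≠ [] ∧ p = pbar ++ q

/-- A marking of a derivation. -/
def IsMarking (n : ℕ) (s : ℕ → Tm F V) (rl : ℕ → Rule F V)
    (pp : ℕ → List ℕ) (M : ℕ → List ℕ → Tm F V) : Prop :=
  (∀ p t, (s 0).subAt p = some t → M 0 p = t) ∧
  ∀ i < n,
    (∀ p, (s (i + 1)).IsPos p → ¬ StrictBelow (pp i) p → M (i + 1) p = M i p) ∧
    (∀ (j : ℕ) (u : Tm F V), (rl i).rhs.subAt [j] = some u → u.IsConst →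
        M (i + 1) (pp i ++ [j]) = u) ∧
    (∀ (j : ℕ) (p₁ : List ℕ) (x : V), (rl i).rhs.subAt [j] = some (Tm.var x) →
        (s (i + 1)).IsPos (pp i ++ j :: p₁) →
        ∃ q₀ : List ℕ, (rl i).lhs.subAt q₀ = some (Tm.var x) ∧
          M (i + 1) (pp i ++ j :: p₁) = M i (pp i ++ q₀ ++ p₁))

end Marking

section WFSig

variable {F V : Type}

/-- Terms respecting the arity function. -/
inductive WFT (ar : F → ℕ) : Tm F V → Prop
  | var (x : V) : WFT ar (Tm.var x)
  | app (f : F) (ts : List (Tm F V)) : ts.length = ar f →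
      (∀ t ∈ ts, WFT ar t) → WFT ar (Tm.app f ts)

end WFSig

/-!
Let `s` rewrite to `t` with `l → r` at `p` and substitution `σ`. A position `q` of `t` that is
not strictly below `p` is a position of `s` too, and `s|_q` equals or rewrites to `t|_q`, so if
`t|_q` is not reachable from a constant neither is `s|_q`. Strictly below `p`, the flat term
`rσ` has as subterms only constants, which are reachable from themselves, and subterms of
`σ x` for the variables `x` of `r`; such a position `p ++ d₀ ++ e`, with `r|_{d₀} = x`, is sent
to `p ++ q₀ ++ e` for an occurrence `q₀` of `x` in `l`, where `s` has the same subterm. Since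
`x` occurs only once in `r`, this assignment is injective, which bounds `‖t‖` by `‖s‖`.
-/

namespace Tm

variable {F V : Type}

theorem induction_on {P : Tm F V → Prop} (t : Tm F V) (var : ∀ x, P (Tm.var x))
    (app : ∀ f ts, (∀ t ∈ ts, P t) → P (Tm.app f ts)) : P t :=
  match t with
  | .var x => var x
  | .app f ts => app f ts fun t _ => induction_on t var app
decreasing_by all_goals (simp_wf; have := List.sizeOf_lt_of_mem ‹t ∈ ts›; omega)

@[simp] theorem subst_var (σ : V → Tm F V) (x : V) : (var x).subst σ = σ x := by rw [subst]

@[simp] theorem subst_app (σ : V → Tm F V) (f : F) (ts : List (Tm F V)) :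
    (app f ts).subst σ = app f (ts.map (subst σ)) := by rw [subst]; simp

@[simp] theorem varList_var (x : V) : (var (F := F) x).varList = [x] := by rw [varList]

theorem varList_app (f : F) (ts : List (Tm F V)) :
    (app f ts).varList = (ts.map varList).flatten := by rw [varList]; simp

@[simp] theorem subAt_nil (t : Tm F V) : t.subAt [] = some t := by cases t <;> rw [subAt]

@[simp] theorem subAt_var_cons (x : V) (i : ℕ) (p : List ℕ) :
    (var (F := F) x).subAt (i :: p) = none := by rw [subAt]

theorem subAt_cons (f : F) (ts : List (Tm F V)) (i : ℕ) (p : List ℕ) :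
    (app f ts).subAt (i :: p) = ts[i]?.bind (·.subAt p) := by
  cases h : ts[i]? <;> simp [subAt, h]

theorem subAt_append (t : Tm F V) (p q : List ℕ) :
    t.subAt (p ++ q) = (t.subAt p).bind (·.subAt q) := by
  induction p generalizing t with
  | nil => simp
  | cons i p ih =>
    cases t with
    | var x => simp
    | app f ts =>
      rw [List.cons_append, subAt_cons, subAt_cons]
      cases ts[i]? <;> simp [ih]

theorem subAt_subst {σ : V → Tm F V} {t w : Tm F V} {q : List ℕ}
    (h : t.subAt q = some w) : (t.subst σ).subAt q = some (w.subst σ) := by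
  induction q generalizing t with
  | nil => simp_all
  | cons i q ih =>
    cases t with
    | var x => simp at h
    | app f ts =>
      rw [subAt_cons] at h
      rw [subst_app, subAt_cons, List.getElem?_map]
      cases hi : ts[i]? with
      | none => simp [hi] at h
      | some a => simpa [hi] using ih (by simpa [hi] using h)

theorem subAt_subst_eq_some {σ : V → Tm F V} {t u : Tm F V} {d : List ℕ}
    (h : (t.subst σ).subAt d = some u) :
    (∃ w, t.subAt d = some w ∧ w.subst σ = u) ∨
      ∃ d₀ e x, d = d₀ ++ e ∧ t.subAt d₀ = some (var x) ∧ (σ x).subAt e = some u := by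
  induction d generalizing t with
  | nil => exact .inl ⟨t, rfl, by simpa using h⟩
  | cons i d ih =>
    cases t with
    | var x => exact .inr ⟨[], i :: d, x, rfl, rfl, by simpa using h⟩
    | app f ts =>
      rw [subst_app, subAt_cons, List.getElem?_map] at h
      cases hi : ts[i]? with
      | none => simp [hi] at h
      | some a =>
        simp only [hi, Option.map_some, Option.bind_some] at h
        have hsub : ∀ d', (app f ts).subAt (i :: d') = a.subAt d' := by simp [subAt_cons, hi]
        rcases ih h with ⟨w, hw, rfl⟩ | ⟨d₀, e, x, rfl, hd₀, he⟩
        · exact .inl ⟨w, by rw [hsub]; exact hw, rfl⟩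
        · exact .inr ⟨i :: d₀, e, x, rfl, by rw [hsub]; exact hd₀, he⟩

@[simp] theorem replAt_nil (t v : Tm F V) : t.replAt [] v = some v := by cases t <;> rw [replAt]

@[simp] theorem replAt_var_cons (x : V) (i : ℕ) (p : List ℕ) (v : Tm F V) :
    (var (F := F) x).replAt (i :: p) v = none := by rw [replAt]

theorem replAt_cons (f : F) (ts : List (Tm F V)) (i : ℕ) (p : List ℕ) (v : Tm F V) :
    (app f ts).replAt (i :: p) v =
      ts[i]?.bind fun u => (u.replAt p v).map fun u' => app f (ts.set i u') := by
  cases h : ts[i]? <;> simp [replAt, h]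

theorem subAt_replAt_append {s t v : Tm F V} {p : List ℕ}
    (h : s.replAt p v = some t) (d : List ℕ) : t.subAt (p ++ d) = v.subAt d := by
  induction p generalizing s t with
  | nil => simp_all
  | cons i p ih =>
    cases s with
    | var x => simp at h
    | app f ts =>
      rw [replAt_cons] at h
      cases hi : ts[i]? with
      | none => simp [hi] at h
      | some u =>
        obtain ⟨u', hu', rfl⟩ : ∃ u', u.replAt p v = some u' ∧ app f (ts.set i u') = t := by
          simpa [hi] using h
        simpa [subAt_cons, List.getElem?_set_self', hi] using ih hu'

theorem subAt_replAt_of_not_prefix {s t v : Tm F V} {p q : List ℕ}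
    (h : s.replAt p v = some t) (hpq : ¬ p <+: q) (hqp : ¬ q <+: p) :
    t.subAt q = s.subAt q := by
  induction p generalizing s t q with
  | nil => exact absurd List.nil_prefix hpq
  | cons i p ih =>
    cases q with
    | nil => exact absurd List.nil_prefix hqp
    | cons j q =>
      cases s with
      | var x => simp at h
      | app f ts =>
        rw [replAt_cons] at h
        cases hi : ts[i]? with
        | none => simp [hi] at h
        | some u =>
          obtain ⟨u', hu', rfl⟩ : ∃ u', u.replAt p v = some u' ∧ app f (ts.set i u') = t := by
            simpa [hi] using h
          by_cases hij : i = j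
          · subst hij
            simpa [subAt_cons, List.getElem?_set_self', hi] using
              ih hu' (fun h' => hpq (List.cons_prefix_cons.mpr ⟨rfl, h'⟩))
                (fun h' => hqp (List.cons_prefix_cons.mpr ⟨rfl, h'⟩))
          · simp [subAt_cons, List.getElem?_set_ne hij]

theorem replAt_append {s t v : Tm F V} {q d : List ℕ} (h : s.replAt (q ++ d) v = some t) :
    ∃ w w', s.subAt q = some w ∧ t.subAt q = some w' ∧ w.replAt d v = some w' := by
  induction q generalizing s t with
  | nil => exact ⟨s, t, subAt_nil s, subAt_nil t, h⟩
  | cons j q ih =>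
    cases s with
    | var x => simp at h
    | app f ts =>
      rw [List.cons_append, replAt_cons] at h
      cases hj : ts[j]? with
      | none => simp [hj] at h
      | some u =>
        obtain ⟨u', hu', rfl⟩ : ∃ u', u.replAt (q ++ d) v = some u' ∧
            app f (ts.set j u') = t := by
          simpa [hj] using h
        simpa [subAt_cons, List.getElem?_set_self', hj] using ih hu'

theorem height_app (f : F) (ts : List (Tm F V)) :
    (app f ts).height = ts.foldr (fun t m => max (t.height + 1) m) 0 := by
  rw [height]; exact List.foldr_attach (f := fun (t : Tm F V) m => max (t.height + 1) m)

theorem height_lt_of_mem {f : F} {ts : List (Tm F V)} {a : Tm F V} (ha : a ∈ ts) :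
    a.height < (app f ts).height := by
  rw [height_app]
  induction ts with
  | nil => simp at ha
  | cons b l ih =>
    rw [List.foldr_cons]
    rcases List.mem_cons.mp ha with rfl | ha
    · exact Nat.lt_of_lt_of_le (Nat.lt_succ_self _) (le_max_left _ _)
    · exact Nat.lt_of_lt_of_le (ih ha) (le_max_right _ _)

theorem height_add_length_le_of_subAt {t w : Tm F V} {d : List ℕ} (h : t.subAt d = some w) :
    w.height + d.length ≤ t.height := by
  induction d generalizing t with
  | nil => simp_all
  | cons i d ih =>
    cases t with
    | var x => simp at h
    | app f ts =>
      rw [subAt_cons] at h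
      cases hi : ts[i]? with
      | none => simp [hi] at h
      | some a =>
        have := ih (by simpa [hi] using h)
        have := height_lt_of_mem (f := f) (List.mem_of_getElem? hi)
        simp only [List.length_cons]
        omega

theorem eq_var_or_const_of_height_eq_zero {t : Tm F V} (h : t.height = 0) :
    (∃ x, t = var x) ∨ ∃ c, t = app c [] := by
  cases t with
  | var x => exact .inl ⟨x, rfl⟩
  | app c ts =>
    cases ts with
    | nil => exact .inr ⟨c, rfl⟩
    | cons a l => exact absurd h (Nat.ne_zero_of_lt (height_lt_of_mem List.mem_cons_self))

theorem Flat.eq_var_or_const_of_subAt {t w : Tm F V} {d : List ℕ} (ht : t.Flat)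
    (h : t.subAt d = some w) (hd : d ≠ []) : (∃ x, w = var x) ∨ ∃ c, w = app c [] := by
  have := height_add_length_le_of_subAt h
  have := List.length_pos_iff.mpr hd
  exact eq_var_or_const_of_height_eq_zero (by unfold Flat at ht; omega)

theorem mem_varList_of_subAt {t : Tm F V} {d : List ℕ} {x : V}
    (h : t.subAt d = some (var x)) : x ∈ t.varList := by
  induction d generalizing t with
  | nil => simp_all
  | cons i d ih =>
    cases t with
    | var y => simp at h
    | app f ts =>
      rw [subAt_cons] at h
      cases hi : ts[i]? with
      | none => simp [hi] at h
      | some a =>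
        rw [varList_app, List.mem_flatten]
        exact ⟨a.varList, List.mem_map_of_mem (List.mem_of_getElem? hi),
          ih (by simpa [hi] using h)⟩

theorem exists_subAt_of_mem_varList {t : Tm F V} {x : V} (hx : x ∈ t.varList) :
    ∃ d, t.subAt d = some (var x) := by
  induction t using induction_on with
  | var y => exact ⟨[], by simp_all⟩
  | app f ts ih =>
    obtain ⟨_, hL, hxL⟩ := List.mem_flatten.mp (varList_app f ts ▸ hx)
    obtain ⟨a, ha, rfl⟩ := List.mem_map.mp hL
    obtain ⟨d, hd⟩ := ih a ha hxL
    obtain ⟨i, hi⟩ := List.getElem?_of_mem ha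
    exact ⟨i :: d, by simpa [subAt_cons, hi] using hd⟩

theorem Linear.subAt_var_inj {t : Tm F V} (ht : t.Linear) {d₁ d₂ : List ℕ} {x : V}
    (h₁ : t.subAt d₁ = some (var x)) (h₂ : t.subAt d₂ = some (var x)) : d₁ = d₂ := by
  induction d₁ generalizing t d₂ with
  | nil =>
    cases d₂ with
    | nil => rfl
    | cons j d₂ => simp_all
  | cons i d₁ ih =>
    cases t with
    | var y => simp at h₁
    | app f ts =>
      cases d₂ with
      | nil => simp at h₂
      | cons j d₂ =>
        rw [subAt_cons] at h₁ h₂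
        obtain ⟨a, hi, ha⟩ := Option.bind_eq_some_iff.mp h₁
        obtain ⟨b, hj, hb⟩ := Option.bind_eq_some_iff.mp h₂
        rw [Linear, varList_app, List.nodup_flatten, List.pairwise_map] at ht
        by_cases hij : i = j
        · subst hij
          obtain rfl : a = b := Option.some.inj (hi.symm.trans hj)
          rw [ih (ht.1 _ (List.mem_map_of_mem (List.mem_of_getElem? hi))) ha hb]
        · exfalso
          obtain ⟨hi', rfl⟩ := List.getElem?_eq_some_iff.mp hi
          obtain ⟨hj', rfl⟩ := List.getElem?_eq_some_iff.mp hj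
          have hdisj : ∀ {k l} (hk : k < ts.length) (hl : l < ts.length), k < l →
              ts[k].varList.Disjoint ts[l].varList := fun hk hl hkl =>
            List.pairwise_iff_getElem.mp ht.2 _ _ hk hl hkl
          rcases Nat.lt_or_gt_of_ne hij with hlt | hlt
          · exact hdisj hi' hj' hlt (mem_varList_of_subAt ha) (mem_varList_of_subAt hb)
          · exact hdisj hj' hi' hlt (mem_varList_of_subAt hb) (mem_varList_of_subAt ha)

/-- Variable occurrences are leaves, so no two of them are nested. -/
theorem eq_of_subAt_var_append {t : Tm F V} {d₁ d₂ e₁ e₂ : List ℕ} {x₁ x₂ : V}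
    (h₁ : t.subAt d₁ = some (var x₁)) (h₂ : t.subAt d₂ = some (var x₂))
    (h : d₁ ++ e₁ = d₂ ++ e₂) : d₁ = d₂ ∧ e₁ = e₂ := by
  have key : ∀ {d d' : List ℕ} {x x' : V}, t.subAt d = some (var x) →
      t.subAt d' = some (var x') → d <+: d' → d = d' := by
    rintro d d' x x' h h' ⟨_ | ⟨i, e⟩, rfl⟩
    · exact (List.append_nil d).symm
    · simp [subAt_append, h] at h'
  obtain rfl : d₁ = d₂ := by
    rcases List.prefix_or_prefix_of_prefix ⟨e₁, rfl⟩ ⟨e₂, h.symm⟩ with hp | hp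
    · exact key h₁ h₂ hp
    · exact (key h₂ h₁ hp).symm
  exact ⟨rfl, List.append_cancel_left h⟩

theorem finite_setOf_isPos (t : Tm F V) : {p | t.IsPos p}.Finite := by
  induction t using induction_on with
  | var x =>
    refine (Set.finite_singleton []).subset fun p hp => ?_
    cases p with
    | nil => rfl
    | cons i q => simp [IsPos] at hp
  | app f ts ih =>
    refine ((Set.finite_iUnion fun i : Fin ts.length =>
      (ih _ (ts.get_mem i)).image ((i : ℕ) :: ·)).insert []).subset fun p hp => ?_
    cases p with
    | nil => exact Set.mem_insert _ _
    | cons i q =>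
      cases hi : ts[i]? with
      | none => simp [IsPos, subAt_cons, hi] at hp
      | some u =>
        obtain ⟨hlt, rfl⟩ := List.getElem?_eq_some_iff.mp hi
        refine Set.mem_insert_of_mem _ (Set.mem_iUnion.mpr ⟨⟨i, hlt⟩, q, ?_, rfl⟩)
        simpa [IsPos, subAt_cons, hi] using hp

end Tm

section Measure

variable {F V : Type} {R : Set (Rule F V)}

theorem FromConst.of_rew {u u' : Tm F V} (hc : FromConst R u) (h : Rew R u u') :
    FromConst R u' :=
  let ⟨f, hf⟩ := hc
  ⟨f, hf.tail h⟩

theorem fromConst_const (c : F) : FromConst R (Tm.app (V := V) c []) :=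
  ⟨c, Relation.ReflTransGen.refl⟩

theorem Tm.Flat.exists_var_of_subAt_subst {t u : Tm F V} {σ : V → Tm F V} {d : List ℕ}
    (ht : t.Flat) (h : (t.subst σ).subAt d = some u) (hd : d ≠ []) (hu : ¬ FromConst R u) :
    ∃ d₀ e x, d = d₀ ++ e ∧ t.subAt d₀ = some (.var x) ∧ (σ x).subAt e = some u := by
  rcases Tm.subAt_subst_eq_some h with ⟨w, hw, rfl⟩ | hvar
  · rcases ht.eq_var_or_const_of_subAt hw hd with ⟨x, rfl⟩ | ⟨c, rfl⟩
    · exact ⟨d, [], x, (List.append_nil d).symm, hw, by simp⟩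
    · exact absurd (by simpa using fromConst_const c) hu
  · exact hvar

def NotFromConstAt (R : Set (Rule F V)) (t : Tm F V) (p : List ℕ) : Prop :=
  ∃ u, t.subAt p = some u ∧ ¬ FromConst R u

theorem meas_le_of_rel {s t : Tm F V} (Φ : List ℕ → List ℕ → Prop)
    (htot : ∀ q, NotFromConstAt R t q → ∃ q', NotFromConstAt R s q' ∧ Φ q q')
    (hinj : ∀ q₁ q₂ q', Φ q₁ q' → Φ q₂ q' → q₁ = q₂) : meas R t ≤ meas R s := by
  have : Finite {q // NotFromConstAt R s q} := Set.Finite.to_subtype <|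
    (Tm.finite_setOf_isPos s).subset fun q (hq : NotFromConstAt R s q) => by
      obtain ⟨_, hq, _⟩ := hq
      simp [Tm.IsPos, hq]
  choose g hg using fun q : {q // NotFromConstAt R t q} => htot q q.2
  show Nat.card {q // NotFromConstAt R t q} ≤ Nat.card {q // NotFromConstAt R s q}
  refine Nat.card_le_card_of_injective (fun q => ⟨g q, (hg q).1⟩) fun q₁ q₂ h => ?_
  exact Subtype.ext (hinj _ _ _ (hg q₁).2 (by rw [Subtype.mk.inj h]; exact (hg q₂).2))

variable {ρ : Rule F V} {p : List ℕ} {σ : V → Tm F V} {s t : Tm F V}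

theorem NotFromConstAt.of_rewWith_of_not_strictBelow (hρ : ρ ∈ R)
    (h : RewWith ρ.lhs ρ.rhs p σ s t) {q : List ℕ} (hq : ¬ StrictBelow p q)
    (hbad : NotFromConstAt R t q) : NotFromConstAt R s q := by
  obtain ⟨u, hu, hnc⟩ := hbad
  by_cases hqp : q <+: p
  · obtain ⟨d, rfl⟩ := hqp
    obtain ⟨w, w', hw, hw', hrepl⟩ := Tm.replAt_append h.2
    obtain rfl : w' = u := Option.some.inj (hw'.symm.trans hu)
    have hredex : w.subAt d = some (ρ.lhs.subst σ) := by
      simpa [Tm.subAt_append, hw] using h.1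
    exact ⟨w, hw, fun hc => hnc (hc.of_rew ⟨d, ρ, hρ, σ, hredex, hrepl⟩)⟩
  · have hpq : ¬ p <+: q := by
      rintro ⟨d, rfl⟩
      by_cases hd : d = []
      · exact hqp (by simp [hd])
      · exact hq ⟨d, hd, rfl⟩
    exact ⟨u, Tm.subAt_replAt_of_not_prefix h.2 hpq hqp ▸ hu, hnc⟩

theorem NotFromConstAt.exists_of_rewWith_of_append (hflat : ρ.RightFlat) (hwf : ρ.WF)
    (h : RewWith ρ.lhs ρ.rhs p σ s t) {d : List ℕ} (hd : d ≠ [])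
    (hbad : NotFromConstAt R t (p ++ d)) :
    ∃ d₀ q₀ e x, d = d₀ ++ e ∧ ρ.rhs.subAt d₀ = some (.var x) ∧
      ρ.lhs.subAt q₀ = some (.var x) ∧ NotFromConstAt R s (p ++ q₀ ++ e) := by
  obtain ⟨u, hu, hnc⟩ := hbad
  rw [Tm.subAt_replAt_append h.2] at hu
  obtain ⟨d₀, e, x, rfl, hd₀, he⟩ := Tm.Flat.exists_var_of_subAt_subst hflat hu hd hnc
  obtain ⟨q₀, hq₀⟩ := Tm.exists_subAt_of_mem_varList (hwf.2 x (Tm.mem_varList_of_subAt hd₀))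
  refine ⟨d₀, q₀, e, x, rfl, hd₀, hq₀, u, ?_, hnc⟩
  simpa [Tm.subAt_append, h.1, Tm.subAt_subst hq₀] using he

theorem meas_le_of_rewWith (hρ : ρ ∈ R) (hflat : ρ.RightFlat) (hlin : ρ.RightLinear)
    (hwf : ρ.WF) (h : RewWith ρ.lhs ρ.rhs p σ s t) : meas R t ≤ meas R s := by
  have hq₀ : ∀ {q₀ x}, ρ.lhs.subAt q₀ = some (.var x) → q₀ ≠ [] := by
    rintro q₀ x hx rfl
    exact hwf.1 x (by simpa using hx)
  refine meas_le_of_rel (fun q q' => (q' = q ∧ ¬ StrictBelow p q) ∨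
    ∃ d₀ q₀ e x, ρ.rhs.subAt d₀ = some (.var x) ∧ ρ.lhs.subAt q₀ = some (.var x) ∧
      q = p ++ d₀ ++ e ∧ q' = p ++ q₀ ++ e) ?_ ?_
  · intro q hq
    by_cases hbelow : StrictBelow p q
    · obtain ⟨d, hd, rfl⟩ := hbelow
      obtain ⟨d₀, q₀, e, x, rfl, hd₀, hq₀, hbad⟩ :=
        NotFromConstAt.exists_of_rewWith_of_append hflat hwf h hd hq
      exact ⟨_, hbad, .inr ⟨d₀, q₀, e, x, hd₀, hq₀, (List.append_assoc ..).symm, rfl⟩⟩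
    · exact ⟨q, NotFromConstAt.of_rewWith_of_not_strictBelow hρ h hbelow hq, .inl ⟨rfl, hbelow⟩⟩
  · have hbelow : ∀ {q₀ e x}, ρ.lhs.subAt q₀ = some (.var x) → StrictBelow p (p ++ q₀ ++ e) :=
      fun hx => ⟨_, by simp [hq₀ hx], List.append_assoc ..⟩
    rintro q₁ q₂ q' (⟨rfl, h₁⟩ | ⟨d₁, q₁', e₁, x₁, hd₁, hq₁, rfl, rfl⟩)
      (⟨h', h₂⟩ | ⟨d₂, q₂', e₂, x₂, hd₂, hq₂, rfl, h'⟩)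
    · exact h' ▸ rfl
    · exact absurd (h' ▸ hbelow hq₂) h₁
    · exact absurd (h' ▸ hbelow hq₁) h₂
    · obtain ⟨rfl, rfl⟩ := Tm.eq_of_subAt_var_append hq₁ hq₂ (by simpa using h')
      obtain rfl : x₁ = x₂ := by simpa [hq₁] using hq₂
      rw [Tm.Linear.subAt_var_inj hlin hd₁ hd₂]

end Measure

/-- For a right-flat right-linear TRS, a rewrite step cannot increase the
measure `‖·‖` counting positions whose subterms are not reachable from a constant. -/
theorem stmt7 {F V : Type} (R : Set (Rule F V))
    (hR : ∀ r ∈ R, r.RightFlat ∧ r.RightLinear) (hRwf : ∀ r ∈ R, r.WF)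
    (s t : Tm F V) (h : Rew R s t) :
    meas R t ≤ meas R s := by
  obtain ⟨p, ρ, hρ, σ, hstep⟩ := h
  exact meas_le_of_rewWith hρ (hR ρ hρ).1 (hR ρ hρ).2 (hRwf ρ hρ) hstep
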